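/- The cocycle ω₂ satisfies the 2-cocycle identity on the semidirect product algebra: for smooth 2π-periodic functions f, g, h, a, b, c : ℝ → ℝ, with bracket [(f,a),(g,b)] = (f g' - f' g, f b' - g a'), one has ω₂([(f,a),(g,b)], (h,c)) + ω₂([(g,b),(h,c)], (f,a)) + ω₂([(h,c),(f,a)], (g,b)) = 0, where ω₂((f,a),(g,b)) = ∫₀^{2π} (f'' b - g'' a) dx. -/

import Mathlib

open Real intervalIntegral

private lemma periodic_deriv' {u : ℝ → ℝ} {T : ℝ} (hu : Function.Periodic u T) :
    Function.Periodic (deriv u) T := by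
  intro x
  have : (fun y => u (y + T)) = u := funext fun y => hu y
  calc deriv u (x + T) = deriv (fun y => u (y + T)) x := (deriv_comp_add_const u T x).symm
    _ = deriv u x := by rw [this]

private lemma smooth_deriv' {u : ℝ → ℝ} (hu : ContDiff ℝ ((⊤ : ℕ∞) : WithTop ℕ∞) u) :
    ContDiff ℝ ((⊤ : ℕ∞) : WithTop ℕ∞) (deriv u) :=
  (contDiff_infty_iff_deriv.mp hu).2

theorem omega2_cocycle
    (f g h a b c : ℝ → ℝ)
    (hf : ContDiff ℝ (⊤ : ℕ∞) f) (hg : ContDiff ℝ (⊤ : ℕ∞) g) (hh : ContDiff ℝ (⊤ : ℕ∞) h)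
    (ha : ContDiff ℝ (⊤ : ℕ∞) a) (hb : ContDiff ℝ (⊤ : ℕ∞) b) (hc : ContDiff ℝ (⊤ : ℕ∞) c)
    (hfp : Function.Periodic f (2 * π)) (hgp : Function.Periodic g (2 * π))
    (hhp : Function.Periodic h (2 * π)) (hap : Function.Periodic a (2 * π))
    (hbp : Function.Periodic b (2 * π)) (hcp : Function.Periodic c (2 * π))
    (bracket : (ℝ → ℝ) × (ℝ → ℝ) → (ℝ → ℝ) × (ℝ → ℝ) → (ℝ → ℝ) × (ℝ → ℝ))
    (hbr : ∀ p q : (ℝ → ℝ) × (ℝ → ℝ), bracket p q =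
      (fun x => p.1 x * deriv q.1 x - deriv p.1 x * q.1 x,
       fun x => p.1 x * deriv q.2 x - q.1 x * deriv p.2 x))
    (ω : (ℝ → ℝ) × (ℝ → ℝ) → (ℝ → ℝ) × (ℝ → ℝ) → ℝ)
    (hω : ∀ p q : (ℝ → ℝ) × (ℝ → ℝ), ω p q =
      ∫ x in (0:ℝ)..(2 * π), (deriv (deriv p.1) x * q.2 x - deriv (deriv q.1) x * p.2 x)) :
    ω (bracket (f, a) (g, b)) (h, c) + ω (bracket (g, b) (h, c)) (f, a)
      + ω (bracket (h, c) (f, a)) (g, b) = 0 := by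
  replace hf : ContDiff ℝ ((⊤ : ℕ∞) : WithTop ℕ∞) f := hf.of_le (by simp); replace hg : ContDiff ℝ ((⊤ : ℕ∞) : WithTop ℕ∞) g := hg.of_le (by simp)
  replace hh : ContDiff ℝ ((⊤ : ℕ∞) : WithTop ℕ∞) h := hh.of_le (by simp); replace ha : ContDiff ℝ ((⊤ : ℕ∞) : WithTop ℕ∞) a := ha.of_le (by simp)
  replace hb : ContDiff ℝ ((⊤ : ℕ∞) : WithTop ℕ∞) b := hb.of_le (by simp); replace hc : ContDiff ℝ ((⊤ : ℕ∞) : WithTop ℕ∞) c := hc.of_le (by simp)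
  have D : ∀ {u : ℝ → ℝ}, ContDiff ℝ ((⊤ : ℕ∞) : WithTop ℕ∞) u → Differentiable ℝ u :=
    fun hu => hu.differentiable (by simp)
  -- first derivative of a bracket's first component
  have brd : ∀ (u v : ℝ → ℝ), ContDiff ℝ ((⊤ : ℕ∞) : WithTop ℕ∞) u → ContDiff ℝ ((⊤ : ℕ∞) : WithTop ℕ∞) v →
      deriv (fun x => u x * deriv v x - deriv u x * v x) =
        fun x => u x * deriv (deriv v) x - deriv (deriv u) x * v x := by
    intro u v hu hv
    funext x
    have h1 : HasDerivAt (fun x => u x * deriv v x - deriv u x * v x)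
        (deriv u x * deriv v x + u x * deriv (deriv v) x -
          (deriv (deriv u) x * v x + deriv u x * deriv v x)) x :=
      (((D hu x).hasDerivAt.mul (D (smooth_deriv' hv) x).hasDerivAt)).sub
        ((D (smooth_deriv' hu) x).hasDerivAt.mul (D hv x).hasDerivAt)
    rw [h1.deriv]; ring
  -- second derivative of a bracket's first component
  have brd2 : ∀ (u v : ℝ → ℝ), ContDiff ℝ ((⊤ : ℕ∞) : WithTop ℕ∞) u → ContDiff ℝ ((⊤ : ℕ∞) : WithTop ℕ∞) v →
      deriv (deriv (fun x => u x * deriv v x - deriv u x * v x)) =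
        fun x => deriv u x * deriv (deriv v) x + u x * deriv (deriv (deriv v)) x -
          (deriv (deriv (deriv u)) x * v x + deriv (deriv u) x * deriv v x) := by
    intro u v hu hv
    rw [brd u v hu hv]
    funext x
    have h1 : HasDerivAt (fun x => u x * deriv (deriv v) x - deriv (deriv u) x * v x)
        (deriv u x * deriv (deriv v) x + u x * deriv (deriv (deriv v)) x -
          (deriv (deriv (deriv u)) x * v x + deriv (deriv u) x * deriv v x)) x :=
      ((D hu x).hasDerivAt.mul (D (smooth_deriv' (smooth_deriv' hv)) x).hasDerivAt).sub
        ((D (smooth_deriv' (smooth_deriv' hu)) x).hasDerivAt.mul (D hv x).hasDerivAt)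
    rw [h1.deriv]
  simp only [hbr, hω, brd2 f g hf hg, brd2 g h hg hh, brd2 h f hh hf]
  -- continuity facts
  have C : ∀ {u : ℝ → ℝ}, ContDiff ℝ ((⊤ : ℕ∞) : WithTop ℕ∞) u → Continuous u := fun hu => hu.continuous
  have cf := C hf; have cg := C hg; have ch := C hh
  have ca := C ha; have cb := C hb; have cc := C hc
  have cf1 := C (smooth_deriv' hf); have cg1 := C (smooth_deriv' hg); have ch1 := C (smooth_deriv' hh)
  have ca1 := C (smooth_deriv' ha); have cb1 := C (smooth_deriv' hb); have cc1 := C (smooth_deriv' hc)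
  have cf2 := C (smooth_deriv' (smooth_deriv' hf))
  have cg2 := C (smooth_deriv' (smooth_deriv' hg))
  have ch2 := C (smooth_deriv' (smooth_deriv' hh))
  have cf3 := C (smooth_deriv' (smooth_deriv' (smooth_deriv' hf)))
  have cg3 := C (smooth_deriv' (smooth_deriv' (smooth_deriv' hg)))
  have ch3 := C (smooth_deriv' (smooth_deriv' (smooth_deriv' hh)))
  have int1 : IntervalIntegrable (fun x =>
      (deriv f x * deriv (deriv g) x + f x * deriv (deriv (deriv g)) x -
        (deriv (deriv (deriv f)) x * g x + deriv (deriv f) x * deriv g x)) * c x -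
      deriv (deriv h) x * (f x * deriv b x - g x * deriv a x)) MeasureTheory.volume 0 (2 * π) := by
    apply Continuous.intervalIntegrable; fun_prop
  have int2 : IntervalIntegrable (fun x =>
      (deriv g x * deriv (deriv h) x + g x * deriv (deriv (deriv h)) x -
        (deriv (deriv (deriv g)) x * h x + deriv (deriv g) x * deriv h x)) * a x -
      deriv (deriv f) x * (g x * deriv c x - h x * deriv b x)) MeasureTheory.volume 0 (2 * π) := by
    apply Continuous.intervalIntegrable; fun_prop
  have int3 : IntervalIntegrable (fun x =>
      (deriv h x * deriv (deriv f) x + h x * deriv (deriv (deriv f)) x -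
        (deriv (deriv (deriv h)) x * f x + deriv (deriv h) x * deriv f x)) * b x -
      deriv (deriv g) x * (h x * deriv a x - f x * deriv c x)) MeasureTheory.volume 0 (2 * π) := by
    apply Continuous.intervalIntegrable; fun_prop
  rw [← intervalIntegral.integral_add int1 int2, ← intervalIntegral.integral_add (int1.add int2) int3]
  -- the primitive
  set F : ℝ → ℝ := fun x =>
    a x * (g x * deriv (deriv h) x - deriv (deriv g) x * h x) -
    b x * (f x * deriv (deriv h) x - deriv (deriv f) x * h x) +
    c x * (f x * deriv (deriv g) x - deriv (deriv f) x * g x) with hF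
  have hderiv : ∀ x ∈ Set.uIcc (0:ℝ) (2 * π), HasDerivAt F
      (((deriv f x * deriv (deriv g) x + f x * deriv (deriv (deriv g)) x -
        (deriv (deriv (deriv f)) x * g x + deriv (deriv f) x * deriv g x)) * c x -
        deriv (deriv h) x * (f x * deriv b x - g x * deriv a x)) +
       ((deriv g x * deriv (deriv h) x + g x * deriv (deriv (deriv h)) x -
        (deriv (deriv (deriv g)) x * h x + deriv (deriv g) x * deriv h x)) * a x -
        deriv (deriv f) x * (g x * deriv c x - h x * deriv b x)) +
       ((deriv h x * deriv (deriv f) x + h x * deriv (deriv (deriv f)) x -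
        (deriv (deriv (deriv h)) x * f x + deriv (deriv h) x * deriv f x)) * b x -
        deriv (deriv g) x * (h x * deriv a x - f x * deriv c x))) x := by
    intro x _
    have hA : HasDerivAt F
        (deriv a x * (g x * deriv (deriv h) x - deriv (deriv g) x * h x) +
          a x * (deriv g x * deriv (deriv h) x + g x * deriv (deriv (deriv h)) x -
            (deriv (deriv (deriv g)) x * h x + deriv (deriv g) x * deriv h x)) -
         (deriv b x * (f x * deriv (deriv h) x - deriv (deriv f) x * h x) +
          b x * (deriv f x * deriv (deriv h) x + f x * deriv (deriv (deriv h)) x -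
            (deriv (deriv (deriv f)) x * h x + deriv (deriv f) x * deriv h x))) +
         (deriv c x * (f x * deriv (deriv g) x - deriv (deriv f) x * g x) +
          c x * (deriv f x * deriv (deriv g) x + f x * deriv (deriv (deriv g)) x -
            (deriv (deriv (deriv f)) x * g x + deriv (deriv f) x * deriv g x)))) x := by
      apply HasDerivAt.add
      apply HasDerivAt.sub
      · exact (D ha x).hasDerivAt.mul
          (((D hg x).hasDerivAt.mul (D (smooth_deriv' (smooth_deriv' hh)) x).hasDerivAt).sub
            ((D (smooth_deriv' (smooth_deriv' hg)) x).hasDerivAt.mul (D hh x).hasDerivAt))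
      · exact (D hb x).hasDerivAt.mul
          (((D hf x).hasDerivAt.mul (D (smooth_deriv' (smooth_deriv' hh)) x).hasDerivAt).sub
            ((D (smooth_deriv' (smooth_deriv' hf)) x).hasDerivAt.mul (D hh x).hasDerivAt))
      · exact (D hc x).hasDerivAt.mul
          (((D hf x).hasDerivAt.mul (D (smooth_deriv' (smooth_deriv' hg)) x).hasDerivAt).sub
            ((D (smooth_deriv' (smooth_deriv' hf)) x).hasDerivAt.mul (D hg x).hasDerivAt))
    convert hA using 1
    ring
  rw [intervalIntegral.integral_eq_sub_of_hasDerivAt hderiv ((int1.add int2).add int3)]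
  -- F is periodic, so F (2π) = F 0
  have pf2 := periodic_deriv' (periodic_deriv' hfp)
  have pg2 := periodic_deriv' (periodic_deriv' hgp)
  have ph2 := periodic_deriv' (periodic_deriv' hhp)
  have : F (2 * π) = F 0 := by
    have e : (2 * π : ℝ) = 0 + 2 * π := by ring
    rw [hF]; dsimp only; rw [e, hfp 0, hgp 0, hhp 0, hap 0, hbp 0, hcp 0, pf2 0, pg2 0, ph2 0]
  rw [this, sub_self]
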